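/- Let L : ℝ^d → ℝ^𝒴 be a loss such that for every p ∈ Δ_𝒴 the infimum inf_{u∈ℝ^d} ⟨p, L(u)⟩ is attained. Then L embeds some discrete loss if and only if risk_L is polyhedral concave, i.e., −risk_L agrees on Δ_𝒴 with a pointwise maximum of finitely many linear functions on ℝ^𝒴. -/
import Mathlib


/-- The probability simplex over a finite outcome set `Y`. -/
def probSimplex (Y : Type*) [Fintype Y] : Set (Y → ℝ) :=
  {p | (∀ y, 0 ≤ p y) ∧ ∑ y, p y = 1}

/-- Expected loss `⟨p, v⟩ = ∑ y, p y * v y`. -/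
def elloss {Y : Type*} [Fintype Y] (p : Y → ℝ) (v : Y → ℝ) : ℝ :=
  ∑ y, p y * v y

/-- `u` minimizes the expected loss `⟨p, L ·⟩` over the report set. -/
def Minimizes {U Y : Type*} [Fintype Y] (p : Y → ℝ) (L : U → Y → ℝ) (u : U) : Prop :=
  ∀ u' : U, elloss p (L u) ≤ elloss p (L u')

/-- The Bayes risk `inf_u ⟨p, L u⟩`. -/
noncomputable def bayesRisk {U Y : Type*} [Fintype Y] (p : Y → ℝ) (L : U → Y → ℝ) : ℝ :=
  sInf (Set.range fun u => elloss p (L u))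

/-- `L` embeds the discrete loss `ℓ`. -/
def Embeds {R Y : Type*} [Fintype Y] {d : ℕ}
    (L : (Fin d → ℝ) → Y → ℝ) (ℓ : R → Y → ℝ) : Prop :=
  ∃ φ : R → (Fin d → ℝ), Function.Injective φ ∧ (∀ r, L (φ r) = ℓ r) ∧
    ∀ p ∈ probSimplex Y, ∀ r, Minimizes p ℓ r ↔ Minimizes p L (φ r)

/-- A polyhedral convex function: a pointwise maximum of finitely many affine functions. -/
def IsPolyhedralFn {d : ℕ} (g : (Fin d → ℝ) → ℝ) : Prop :=
  ∃ (m : ℕ) (a : Fin (m + 1) → Fin d → ℝ) (b : Fin (m + 1) → ℝ),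
    ∀ x, g x = Finset.univ.sup' Finset.univ_nonempty (fun i => ∑ j, a i j * x j + b i)
open Finset

lemma sup'_neg_eq_neg_inf' {ι : Type*} (s : Finset ι) (h : s.Nonempty) (f : ι → ℝ) :
    s.sup' h (fun i => -f i) = -(s.inf' h f) := by
  apply le_antisymm
  · exact Finset.sup'_le _ _ fun i hi => neg_le_neg (Finset.inf'_le _ hi)
  · obtain ⟨i, hi, hmin⟩ := s.exists_min_image f h
    have hv : s.inf' h f = f i := le_antisymm (Finset.inf'_le _ hi) (Finset.le_inf' _ _ hmin)
    rw [hv]; exact Finset.le_sup' (fun i => -f i) hi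

section Aux
variable {Y : Type*} [Fintype Y]

lemma elloss_nonneg {p v : Y → ℝ} (hp : ∀ y, 0 ≤ p y) (hv : ∀ y, 0 ≤ v y) :
    0 ≤ elloss p v :=
  Finset.sum_nonneg fun y _ => mul_nonneg (hp y) (hv y)

lemma bddBelow_elloss_range {U : Type*} (p : Y → ℝ) (hp : ∀ y, 0 ≤ p y)
    (L : U → Y → ℝ) (hL0 : ∀ u y, 0 ≤ L u y) :
    BddBelow (Set.range fun u => elloss p (L u)) := by
  refine ⟨0, ?_⟩
  rintro _ ⟨u, rfl⟩
  exact elloss_nonneg hp (hL0 u)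

lemma bayesRisk_le {U : Type*} (p : Y → ℝ) (hp : ∀ y, 0 ≤ p y)
    (L : U → Y → ℝ) (hL0 : ∀ u y, 0 ≤ L u y) (u : U) :
    bayesRisk p L ≤ elloss p (L u) :=
  csInf_le (bddBelow_elloss_range p hp L hL0) ⟨u, rfl⟩

lemma Minimizes.bayesRisk_eq {U : Type*} {p : Y → ℝ} {L : U → Y → ℝ} {u : U}
    (h : Minimizes p L u) : bayesRisk p L = elloss p (L u) := by
  refine IsLeast.csInf_eq ⟨⟨u, rfl⟩, ?_⟩
  rintro _ ⟨u', rfl⟩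
  exact h u'

lemma continuous_elloss (v : Y → ℝ) : Continuous fun p : Y → ℝ => elloss p v :=
  continuous_finset_sum _ fun y _ => (continuous_apply y).mul continuous_const

lemma elloss_smul (s : ℝ) (p v : Y → ℝ) : elloss (s • p) v = s * elloss p v := by
  simp [elloss, Finset.mul_sum, mul_assoc]

lemma elloss_sub (p v w : Y → ℝ) : elloss p (v - w) = elloss p v - elloss p w := by
  simp [elloss, mul_sub, Finset.sum_sub_distrib]

lemma elloss_comb (p q : Y → ℝ) (σ : ℝ) (w : Y → ℝ) :
    elloss (fun y => p y + σ * (q y - p y)) w = elloss p w + σ * (elloss q w - elloss p w) := by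
  simp only [elloss, add_mul, Finset.sum_add_distrib, Finset.mul_sum, sub_mul, mul_assoc,
    Finset.sum_sub_distrib, mul_sub]

end Aux

section Fwd
variable {Y : Type*} [Fintype Y] {d : ℕ}

lemma fwd_dir {m : ℕ} (L : (Fin d → ℝ) → Y → ℝ) (ℓ : Fin (m + 1) → Y → ℝ)
    (hE : Embeds L ℓ) (p : Y → ℝ) (hp : p ∈ probSimplex Y) :
    -bayesRisk p L = Finset.univ.sup' Finset.univ_nonempty (fun i => ∑ y, -ℓ i y * p y) := by
  obtain ⟨φ, hinj, hLφ, hiff⟩ := hE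
  obtain ⟨r, -, hr⟩ := Finset.exists_min_image Finset.univ (fun r => elloss p (ℓ r))
    Finset.univ_nonempty
  have hmin : Minimizes p ℓ r := fun r' => hr r' (Finset.mem_univ r')
  have hminL : Minimizes p L (φ r) := (hiff p hp r).mp hmin
  have hrisk : bayesRisk p L = elloss p (ℓ r) := by
    rw [hminL.bayesRisk_eq, hLφ r]
  have hterm : ∀ i, (∑ y, -ℓ i y * p y) = -(elloss p (ℓ i)) := by
    intro i
    simp [elloss, Finset.sum_neg_distrib, mul_comm]
  rw [hrisk]
  apply le_antisymm
  · have := Finset.le_sup' (fun i => ∑ y, -ℓ i y * p y) (Finset.mem_univ r)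
    rw [hterm r] at this
    exact this
  · refine Finset.sup'_le _ _ fun i _ => ?_
    rw [hterm i]
    exact neg_le_neg (hr i (Finset.mem_univ i))

end Fwd
section Cover
variable {Y : Type*} [Fintype Y]

lemma covering_lemma {k : ℕ} (c : Fin (k + 1) → Y → ℝ) (p : Y → ℝ) (hp : ∀ y, 0 ≤ p y) :
    ∃ i, (interior ({q : Y → ℝ | ∀ j, elloss q (c i) ≤ elloss q (c j)} ∩
        {q : Y → ℝ | ∀ y, 0 ≤ q y})).Nonempty ∧ (∀ j, elloss p (c i) ≤ elloss p (c j)) := by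
  classical
  set C : Fin (k + 1) → Set (Y → ℝ) :=
    fun i => {q : Y → ℝ | ∀ j, elloss q (c i) ≤ elloss q (c j)} with hC
  set K : Set (Y → ℝ) := {q : Y → ℝ | ∀ y, 0 ≤ q y} with hK
  have hCclosed : ∀ i, IsClosed (C i) := by
    intro i
    have h1 : C i = ⋂ j, {q : Y → ℝ | elloss q (c i) ≤ elloss q (c j)} := by
      ext q; simp [hC, Set.mem_iInter]
    rw [h1]
    exact isClosed_iInter fun j => isClosed_le (continuous_elloss _) (continuous_elloss _)
  have hKclosed : IsClosed K := by
    have h1 : K = ⋂ y : Y, {q : Y → ℝ | 0 ≤ q y} := by ext q; simp [hK, Set.mem_iInter]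
    rw [h1]
    exact isClosed_iInter fun y => isClosed_le continuous_const (continuous_apply y)
  set F : Option (Fin (k + 1)) → Set (Y → ℝ) :=
    fun o => o.elim {q : Y → ℝ | ∃ y, q y ≤ 0} (fun i => C i ∩ K) with hF
  have hFclosed : ∀ o, IsClosed (F o) := by
    rintro (_ | i)
    · have h1 : F none = ⋃ y : Y, {q : Y → ℝ | q y ≤ 0} := by ext q; simp [hF]
      rw [h1]
      exact isClosed_iUnion_of_finite fun y => isClosed_le (continuous_apply y) continuous_const
    · exact (hCclosed i).inter hKclosed
  have hFcover : ⋃ o, F o = Set.univ := by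
    refine Set.eq_univ_of_forall fun q => ?_
    by_cases h : ∀ y, 0 ≤ q y
    · obtain ⟨i, -, hi⟩ := Finset.exists_min_image Finset.univ (fun j => elloss q (c j))
        Finset.univ_nonempty
      exact Set.mem_iUnion.mpr ⟨some i, ⟨fun j => hi j (Finset.mem_univ j), h⟩⟩
    · push_neg at h
      obtain ⟨y, hy⟩ := h
      exact Set.mem_iUnion.mpr ⟨none, ⟨y, hy.le⟩⟩
  have hdense := dense_iUnion_interior_of_closed hFclosed hFcover
  by_contra hcon
  push_neg at hcon
  set fat : Fin (k + 1) → Prop := fun i => (interior (C i ∩ K)).Nonempty with hfat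
  set Bad : Set (Y → ℝ) := ⋃ i, (if fat i then C i else ∅) with hBad
  have hBadclosed : IsClosed Bad := by
    refine isClosed_iUnion_of_finite fun i => ?_
    by_cases h : fat i
    · simpa [h] using hCclosed i
    · simp [h]
  have hpBad : p ∉ Bad := by
    intro hmem
    obtain ⟨i, hi⟩ := Set.mem_iUnion.mp hmem
    by_cases h : fat i
    · rw [if_pos h] at hi
      obtain ⟨j, hj⟩ := hcon i h
      exact absurd (hi j) (not_le.mpr hj)
    · rw [if_neg h] at hi
      exact hi
  obtain ⟨ε, hε, hball⟩ := Metric.isOpen_iff.mp hBadclosed.isOpen_compl p hpBad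
  set r : ℝ := ε / 4 with hr
  have hrpos : 0 < r := by positivity
  set pc : Y → ℝ := fun y => p y + r with hpc
  obtain ⟨q, hq1, hq2⟩ := Metric.dense_iff.mp hdense pc r hrpos
  have hqpos : ∀ y, 0 < q y := by
    intro y
    have h1 : dist (q y) (pc y) ≤ dist q pc := dist_le_pi_dist q pc y
    have h2 : dist q pc < r := Metric.mem_ball.mp hq1
    have h3 : |q y - (p y + r)| < r := by
      rw [← Real.dist_eq]; exact lt_of_le_of_lt h1 h2
    have h4 := abs_lt.mp h3
    have := hp y
    linarith [h4.1]
  obtain ⟨o, ho⟩ := Set.mem_iUnion.mp hq2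
  match o with
  | none =>
      obtain ⟨y, hy⟩ := interior_subset ho
      exact absurd hy (not_le.mpr (hqpos y))
  | some i =>
      have hfi : fat i := ⟨q, ho⟩
      have hqCi : q ∈ C i := (interior_subset ho).1
      have hqBad : q ∈ Bad := Set.mem_iUnion.mpr ⟨i, by rw [if_pos hfi]; exact hqCi⟩
      have hdpc : dist pc p ≤ r := by
        rw [dist_pi_le_iff hrpos.le]
        intro y
        rw [Real.dist_eq]
        simp [hpc, abs_of_nonneg hrpos.le]
      have hdq : dist q p < ε := by
        calc dist q p ≤ dist q pc + dist pc p := dist_triangle _ _ _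
          _ < r + r := by linarith [Metric.mem_ball.mp hq1]
          _ < ε := by rw [hr]; linarith
      exact (hball (Metric.mem_ball.mpr hdq)) hqBad

end Cover
section Key
variable {Y : Type*} [Fintype Y]

lemma key_lemma [Nonempty Y] {d k : ℕ} (L : (Fin d → ℝ) → Y → ℝ)
    (hL0 : ∀ u y, 0 ≤ L u y)
    (hatt : ∀ p ∈ probSimplex Y, ∃ u, Minimizes p L u)
    (c : Fin (k + 1) → Y → ℝ)
    (hrisk : ∀ p ∈ probSimplex Y,
      bayesRisk p L = Finset.univ.inf' Finset.univ_nonempty (fun j => elloss p (c j)))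
    (i : Fin (k + 1))
    (hfat : (interior ({q : Y → ℝ | ∀ j, elloss q (c i) ≤ elloss q (c j)} ∩
        {q : Y → ℝ | ∀ y, 0 ≤ q y})).Nonempty) :
    ∃ u, ∀ p ∈ probSimplex Y, elloss p (L u) = elloss p (c i) := by
  classical
  have pieceRisk : ∀ q, q ∈ probSimplex Y → (∀ j, elloss q (c i) ≤ elloss q (c j)) →
      bayesRisk q L = elloss q (c i) := by
    intro q hq hqC
    rw [hrisk q hq]
    exact le_antisymm (Finset.inf'_le _ (Finset.mem_univ i))
      (Finset.le_inf' _ _ fun j _ => hqC j)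
  have cone : ∀ (s : ℝ) (q : Y → ℝ), 0 < s → (∀ j, elloss q (c i) ≤ elloss q (c j)) →
      (∀ j, elloss (s • q) (c i) ≤ elloss (s • q) (c j)) := by
    intro s q hs h j
    rw [elloss_smul, elloss_smul]
    exact mul_le_mul_of_nonneg_left (h j) hs.le
  obtain ⟨x, hx⟩ := hfat
  rw [mem_interior_iff_mem_nhds] at hx
  obtain ⟨ε, hε, hball⟩ := Metric.mem_nhds_iff.mp hx
  have hxK : ∀ y, 0 < x y := by
    intro y
    have hmem : Function.update x y (x y - ε / 2) ∈ Metric.ball x ε := by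
      rw [Metric.mem_ball]
      have hle : dist (Function.update x y (x y - ε / 2)) x ≤ ε / 2 := by
        rw [dist_pi_le_iff (by positivity)]
        intro y'
        rw [Real.dist_eq]
        by_cases h : y' = y
        · subst h
          rw [Function.update_self, show x y' - ε / 2 - x y' = -(ε / 2) by ring, abs_neg,
            abs_of_nonneg (by positivity)]
        · rw [Function.update_of_ne h, sub_self, abs_zero]
          positivity
      linarith
    have h2 := (hball hmem).2 y
    rw [Function.update_self] at h2
    linarith
  have hxC : ∀ j, elloss x (c i) ≤ elloss x (c j) := (hball (Metric.mem_ball_self hε)).1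
  set s : ℝ := ∑ y, x y with hs_def
  have hs : 0 < s := Finset.sum_pos (fun y _ => hxK y) Finset.univ_nonempty
  set ph : Y → ℝ := s⁻¹ • x with hph_def
  have hph_apply : ∀ y, ph y = s⁻¹ * x y := fun y => rfl
  have hph_simplex : ph ∈ probSimplex Y := by
    constructor
    · intro y; exact mul_nonneg (inv_nonneg.mpr hs.le) (hxK y).le
    · simp only [hph_apply, ← Finset.mul_sum]
      exact inv_mul_cancel₀ hs.ne'
  have hphpos : ∀ y, 0 < ph y := fun y => mul_pos (inv_pos.mpr hs) (hxK y)
  have hphC : ∀ j, elloss ph (c i) ≤ elloss ph (c j) := cone s⁻¹ x (inv_pos.mpr hs) hxC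
  obtain ⟨u, hu⟩ := hatt ph hph_simplex
  clear_value s ph
  refine ⟨u, fun p hp => ?_⟩
  have h0 : elloss ph (L u) = elloss ph (c i) := by
    have h1 := hu.bayesRisk_eq
    have h2 := pieceRisk ph hph_simplex hphC
    linarith
  set w : Y → ℝ := L u - c i with hw_def
  have hw : ∀ q : Y → ℝ, elloss q w = elloss q (L u) - elloss q (c i) :=
    fun q => elloss_sub q (L u) (c i)
  have hwph : elloss ph w = 0 := by rw [hw]; linarith
  clear_value w
  set B : ℝ := dist p ph + 1 with hB_def
  clear_value B
  have hB : 0 < B := by rw [hB_def]; positivity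
  have hBy : ∀ y, |p y - ph y| ≤ B := by
    intro y
    have h1 : dist (p y) (ph y) ≤ dist p ph := dist_le_pi_dist p ph y
    rw [Real.dist_eq] at h1
    linarith
  obtain ⟨y0, -, hy0⟩ := Finset.exists_min_image Finset.univ ph Finset.univ_nonempty
  set μ : ℝ := ph y0 with hμ_def
  have hμ : 0 < μ := hphpos y0
  clear_value μ
  set t : ℝ := min (μ / B) (ε / (s * B)) / 2 with ht_def
  have ht : 0 < t := by
    rw [ht_def]
    have := lt_min (div_pos hμ hB) (div_pos hε (mul_pos hs hB))
    linarith
  clear_value t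
  have htB1 : t * B < μ := by
    have h1 : t ≤ (μ / B) / 2 := by
      rw [ht_def]
      exact div_le_div_of_nonneg_right (min_le_left _ _) (by norm_num)
    have h2 : t * B ≤ (μ / B / 2) * B := mul_le_mul_of_nonneg_right h1 hB.le
    have h3 : (μ / B / 2) * B = μ / 2 := by field_simp
    rw [h3] at h2
    linarith
  have htB2 : s * (t * B) < ε := by
    have h1 : t ≤ (ε / (s * B)) / 2 := by
      rw [ht_def]
      exact div_le_div_of_nonneg_right (min_le_right _ _) (by norm_num)
    have h2 : t * (s * B) ≤ (ε / (s * B) / 2) * (s * B) :=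
      mul_le_mul_of_nonneg_right h1 (mul_pos hs hB).le
    have h3 : (ε / (s * B) / 2) * (s * B) = ε / 2 := by
      field_simp
    rw [h3] at h2
    nlinarith
  have hstep : ∀ σ : ℝ, |σ| = t → 0 ≤ σ * elloss p w := by
    intro σ hσ
    set q : Y → ℝ := fun y => ph y + σ * (p y - ph y) with hq_def
    clear_value q
    have hσB : ∀ y, |σ * (p y - ph y)| ≤ t * B := by
      intro y
      rw [abs_mul, hσ]
      exact mul_le_mul_of_nonneg_left (hBy y) ht.le
    have hqsimplex : q ∈ probSimplex Y := by
      constructor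
      · intro y
        have h1 := (abs_le.mp (hσB y)).1
        have h2 := hy0 y (Finset.mem_univ y)
        simp only [hq_def]
        linarith
      · have hsum : ∑ y, q y = ∑ y, ph y + σ * (∑ y, p y - ∑ y, ph y) := by
          simp only [hq_def, mul_sub, Finset.sum_add_distrib, Finset.mul_sum,
            Finset.sum_sub_distrib]
        rw [hsum, hph_simplex.2, hp.2]; ring
    have hqC : ∀ j, elloss q (c i) ≤ elloss q (c j) := by
      have hmem : s • q ∈ Metric.ball x ε := by
        rw [Metric.mem_ball]
        have hle : dist (s • q) x ≤ s * (t * B) := by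
          rw [dist_pi_le_iff (by positivity)]
          intro y
          rw [Real.dist_eq]
          have heq : (s • q) y - x y = s * (σ * (p y - ph y)) := by
            have : s * ph y = x y := by
              rw [hph_apply, ← mul_assoc, mul_inv_cancel₀ hs.ne', one_mul]
            simp only [Pi.smul_apply, smul_eq_mul, hq_def]
            rw [mul_add, this]; ring
          rw [heq, abs_mul, abs_of_pos hs]
          exact mul_le_mul_of_nonneg_left (hσB y) hs.le
        linarith
      have h1 := hball hmem
      have h2 := cone s⁻¹ (s • q) (inv_pos.mpr hs) h1.1
      rwa [inv_smul_smul₀ hs.ne'] at h2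
    have hq0 : 0 ≤ elloss q w := by
      rw [hw q]
      have hr1 : bayesRisk q L = elloss q (c i) := pieceRisk q hqsimplex hqC
      have hr2 : bayesRisk q L ≤ elloss q (L u) := bayesRisk_le q hqsimplex.1 L hL0 u
      linarith
    have hcomb : elloss q w = elloss ph w + σ * (elloss p w - elloss ph w) := by
      rw [hq_def]; exact elloss_comb ph p σ w
    rw [hwph] at hcomb
    simp only [sub_zero, zero_add] at hcomb
    linarith [hcomb ▸ hq0]
  have h1 := hstep t (abs_of_pos ht)
  have h2 := hstep (-t) (by rw [abs_neg, abs_of_pos ht])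
  have h3 : elloss p w = 0 := by nlinarith
  rw [hw p] at h3
  linarith

end Key
section Bwd
variable {Y : Type*} [Fintype Y]

lemma bwd_dir [Nonempty Y] {d k : ℕ} (L : (Fin d → ℝ) → Y → ℝ)
    (hL0 : ∀ u y, 0 ≤ L u y)
    (hatt : ∀ p ∈ probSimplex Y, ∃ u, Minimizes p L u)
    (a : Fin (k + 1) → Y → ℝ)
    (ha : ∀ p ∈ probSimplex Y,
      -bayesRisk p L = Finset.univ.sup' Finset.univ_nonempty (fun i => ∑ y, a i y * p y)) :
    ∃ (m : ℕ) (ℓ : Fin (m + 1) → Y → ℝ), (∀ r y, 0 ≤ ℓ r y) ∧ Embeds L ℓ := by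
  classical
  set c : Fin (k + 1) → Y → ℝ := fun i y => -(a i y) with hc
  have hrisk : ∀ p ∈ probSimplex Y,
      bayesRisk p L = Finset.univ.inf' Finset.univ_nonempty (fun j => elloss p (c j)) := by
    intro p hp
    have h1 := ha p hp
    have h3 : (Finset.univ.sup' Finset.univ_nonempty fun i => ∑ y, a i y * p y) =
        Finset.univ.sup' Finset.univ_nonempty (fun i => -(elloss p (c i))) := by
      refine Finset.sup'_congr _ rfl fun i _ => ?_
      simp [hc, elloss, Finset.sum_neg_distrib, mul_comm]
    rw [h3, sup'_neg_eq_neg_inf'] at h1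
    linarith
  set fat : Fin (k + 1) → Prop := fun i =>
    (interior ({q : Y → ℝ | ∀ j, elloss q (c i) ≤ elloss q (c j)} ∩
      {q : Y → ℝ | ∀ y, 0 ≤ q y})).Nonempty with hfat
  have key : ∀ i, fat i → ∃ u, ∀ p ∈ probSimplex Y, elloss p (L u) = elloss p (c i) :=
    fun i h => key_lemma L hL0 hatt c hrisk i h
  choose! U hU using key
  have hcov : ∀ p : Y → ℝ, (∀ y, 0 ≤ p y) →
      ∃ i, fat i ∧ ∀ j, elloss p (c i) ≤ elloss p (c j) := fun p hp => covering_lemma c p hp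
  set fats : Finset (Fin (k + 1)) := Finset.univ.filter fat with hfats
  set us : Finset (Fin d → ℝ) := fats.image U with hus
  have hus_ne : us.Nonempty := by
    obtain ⟨i, hfi, -⟩ := hcov (fun _ => (Fintype.card Y : ℝ)⁻¹) (fun y => by positivity)
    exact ⟨U i, Finset.mem_image_of_mem U (Finset.mem_filter.mpr ⟨Finset.mem_univ i, hfi⟩)⟩
  set m : ℕ := us.card - 1 with hm_def
  have hm : us.card = m + 1 := (Nat.succ_pred_eq_of_pos (Finset.card_pos.mpr hus_ne)).symm
  set e : {x // x ∈ us} ≃ Fin (m + 1) := us.equivFin.trans (finCongr hm) with he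
  set φ : Fin (m + 1) → (Fin d → ℝ) := fun r => (e.symm r : Fin d → ℝ) with hφ
  refine ⟨m, fun r => L (φ r), fun r y => hL0 _ y, φ, ?_, fun r => rfl, ?_⟩
  · intro r1 r2 h
    exact e.symm.injective (Subtype.ext h)
  · intro p hp r
    constructor
    · intro hmin v
      obtain ⟨i, hfi, hic⟩ := hcov p hp.1
      have hui : U i ∈ us :=
        Finset.mem_image_of_mem U (Finset.mem_filter.mpr ⟨Finset.mem_univ i, hfi⟩)
      have hφr0 : φ (e ⟨U i, hui⟩) = U i := by
        rw [hφ]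
        simp
      have hval : elloss p (L (U i)) = elloss p (c i) := hU i hfi p hp
      have hlow : bayesRisk p L = elloss p (c i) := by
        rw [hrisk p hp]
        exact le_antisymm (Finset.inf'_le _ (Finset.mem_univ i))
          (Finset.le_inf' _ _ fun j _ => hic j)
      have h5 : bayesRisk p L ≤ elloss p (L v) := bayesRisk_le p hp.1 L hL0 v
      have h6 := hmin (e ⟨U i, hui⟩)
      simp only [hφr0] at h6
      calc elloss p (L (φ r)) ≤ elloss p (L (U i)) := h6
        _ = elloss p (c i) := hval
        _ = bayesRisk p L := hlow.symm
        _ ≤ elloss p (L v) := h5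
    · intro hmin r'
      exact hmin (φ r')

end Bwd

/-- A loss `L` (with attained infima) embeds some discrete loss iff its Bayes
risk is polyhedral concave, i.e. `-bayesRisk` agrees on the simplex with a pointwise maximum of
finitely many linear functions. -/
theorem embeds_some_discrete_iff_polyhedral_bayesRisk
    {Y : Type*} [Fintype Y] {d : ℕ}
    (L : (Fin d → ℝ) → Y → ℝ) (hL0 : ∀ u y, 0 ≤ L u y)
    (hatt : ∀ p ∈ probSimplex Y, ∃ u, Minimizes p L u) :
    (∃ (m : ℕ) (ℓ : Fin (m + 1) → Y → ℝ), (∀ r y, 0 ≤ ℓ r y) ∧ Embeds L ℓ) ↔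
    (∃ (m : ℕ) (a : Fin (m + 1) → Y → ℝ), ∀ p ∈ probSimplex Y,
      -bayesRisk p L = Finset.univ.sup' Finset.univ_nonempty (fun i => ∑ y, a i y * p y)) := by
  constructor
  · rintro ⟨m, ℓ, -, hE⟩
    exact ⟨m, fun i y => -ℓ i y, fun p hp => fwd_dir L ℓ hE p hp⟩
  · rintro ⟨m, a, ha⟩
    rcases isEmpty_or_nonempty Y with hY | hY
    · refine ⟨0, fun _ => L (fun _ => 0), fun r y => hL0 _ y,
        fun _ => (fun _ => 0 : Fin d → ℝ), fun r1 r2 _ => Fin.fin_one_eq_zero r1 ▸ (Fin.fin_one_eq_zero r2).symm ▸ rfl,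
        fun r => rfl, ?_⟩
      intro p hp
      exfalso
      have h2 := hp.2
      simp [Finset.univ_eq_empty] at h2
    · exact bwd_dir L hL0 hatt a ha
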